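/- Let C ⊆ L^∞(Ω, F, P) be a norm-closed convex cone with C ∩ L^∞_+ = {0} and -L^∞_+ ⊆ C. Then there exists a probability measure Q equivalent to P such that sup_{x ∈ C₁} ∫ x dQ < ∞, where C₁ = {x ∈ C : ess inf x ≥ -1}. -/

import Mathlib

/-!
We work in `L²(P)`, which is its own dual. Let `D` be the closure in `L²` of the functions lying
below some `x ∈ C₁`. If, for a non-null set `N`, every multiple `t • 1_N` lay in `D`, Chebyshev's
inequality would give `xₖ ∈ C₁` with `xₖ ≥ k + 1` on a common non-null set `B ⊆ N`; then
`min (xₖ / (k + 1)) 1_B ∈ C` converges uniformly to `1_B`, so `1_B ∈ C ∩ L^∞₊ = {0}`, which is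
absurd. Hence some `t • 1_N` is separated from `D` by Hahn–Banach, which yields a density `W ≥ 0`
charging `N` with `∫ W x ≤ 1` for all `x ∈ C₁`. A Halmos–Savage exhaustion (countable convex
combinations of such densities) produces an a.e. positive one, and normalised it is the density
of `Q`.
-/

open MeasureTheory Filter Set
open scoped ENNReal RealInnerProductSpace

section ConvexSets

variable {E : Type*} [AddCommGroup E] [Module ℝ E] {C : Set E}

theorem add_mem_of_convex_of_smul_mem (hconv : Convex ℝ C)
    (hcone : ∀ c : ℝ, 0 ≤ c → ∀ x ∈ C, c • x ∈ C) {x y : E} (hx : x ∈ C) (hy : y ∈ C) :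
    x + y ∈ C := by
  have := hcone 2 zero_le_two _ (hconv hx hy (by norm_num : (0 : ℝ) ≤ 2⁻¹)
    (by norm_num : (0 : ℝ) ≤ 2⁻¹) (by norm_num))
  rwa [smul_add, smul_smul, smul_smul, mul_inv_cancel₀ two_ne_zero, one_smul, one_smul] at this

theorem isLowerSet_of_convex_of_smul_mem [PartialOrder E] [IsOrderedAddMonoid E]
    (hconv : Convex ℝ C) (hcone : ∀ c : ℝ, 0 ≤ c → ∀ x ∈ C, c • x ∈ C)
    (hneg : ∀ x, 0 ≤ x → -x ∈ C) : IsLowerSet C := by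
  intro x z hzx hx
  have := add_mem_of_convex_of_smul_mem hconv hcone hx (hneg (x - z) (sub_nonneg.2 hzx))
  rwa [neg_sub, add_sub_cancel] at this

theorem Convex.sum_range_geometric_smul_mem (hconv : Convex ℝ C) (h0 : 0 ∈ C) (m : ℕ)
    {W : ℕ → E} (hW : ∀ n, W n ∈ C) :
    ∑ n ∈ Finset.range m, (2⁻¹ : ℝ) ^ (n + 1) • W n ∈ C := by
  induction m generalizing W with
  | zero => simpa using h0
  | succ m ih =>
    have := hconv (hW 0) (ih fun n => hW (n + 1)) (by norm_num : (0 : ℝ) ≤ 2⁻¹)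
      (by norm_num : (0 : ℝ) ≤ 2⁻¹) (by norm_num)
    rw [Finset.smul_sum] at this
    rw [Finset.sum_range_succ', add_comm]
    simpa [smul_smul, pow_succ, mul_comm] using this

theorem Convex.tsum_geometric_smul_mem [TopologicalSpace E] (hconv : Convex ℝ C)
    (hclosed : IsClosed C) (h0 : 0 ∈ C) {W : ℕ → E} (hW : ∀ n, W n ∈ C)
    (hsum : Summable fun n => (2⁻¹ : ℝ) ^ (n + 1) • W n) :
    ∑' n, (2⁻¹ : ℝ) ^ (n + 1) • W n ∈ C :=
  hclosed.mem_of_tendsto hsum.hasSum.tendsto_sum_nat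
    (Eventually.of_forall fun m => hconv.sum_range_geometric_smul_mem h0 m hW)

end ConvexSets

section Lp

variable {Ω : Type*} [MeasurableSpace Ω] {μ : Measure Ω}

namespace MeasureTheory

instance Lp.instPosSMulMono {p : ℝ≥0∞} : PosSMulMono ℝ (Lp ℝ p μ) where
  smul_le_smul_of_nonneg_left c hc f g hfg := by
    rw [← Lp.coeFn_le] at hfg ⊢
    filter_upwards [hfg, Lp.coeFn_smul c f, Lp.coeFn_smul c g] with ω h hf hg
    rw [hf, hg]
    exact smul_le_smul_of_nonneg_left h hc

theorem Lp.ae_le_of_le_essInf (x : Lp ℝ ∞ μ) {c : ℝ} (h : c ≤ essInf x μ) :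
    ∀ᵐ ω ∂μ, c ≤ x ω := by
  obtain ⟨K, hK⟩ := eLpNormEssSup_lt_top_iff_isBoundedUnder.1
    (eLpNorm_exponent_top (f := ⇑x) ▸ Lp.eLpNorm_lt_top x)
  have hbdd : IsBoundedUnder (· ≥ ·) (ae μ) x := ⟨-K, eventually_map.2 <| by
    filter_upwards [eventually_map.1 hK] with ω (hω : ‖x ω‖ ≤ K)
    exact neg_le_of_abs_le hω⟩
  filter_upwards [ae_essInf_le hbdd] with ω hω using h.trans hω

theorem Lp.mem_of_forall_exists_ae_sub_le [IsFiniteMeasure μ] {C : Set (Lp ℝ ∞ μ)}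
    (hclosed : IsClosed C) (hlower : IsLowerSet C) (y : Lp ℝ ∞ μ)
    (h : ∀ ε > 0, ∃ x ∈ C, ∀ᵐ ω ∂μ, y ω - ε ≤ x ω) : y ∈ C := by
  refine hclosed.closure_subset (Metric.mem_closure_iff.2 fun ε hε => ?_)
  obtain ⟨x, hxC, hx⟩ := h (ε / 2) (half_pos hε)
  refine ⟨x ⊓ y, hlower inf_le_left hxC, ?_⟩
  rw [dist_comm, _root_.dist_eq_norm]
  refine (Lp.norm_le_of_ae_bound (half_pos hε).le ?_).trans_lt ?_
  · filter_upwards [Lp.coeFn_sub (x ⊓ y) y, Lp.coeFn_inf x y, hx] with ω h1 h2 h3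
    rw [h1, Pi.sub_apply, h2, Pi.inf_apply, Real.norm_eq_abs, abs_le]
    constructor <;> cases min_cases (x ω) (y ω) <;> linarith
  · simp [half_lt_self hε]

theorem L2.inner_eq_integral_mul (f g : Lp ℝ 2 μ) : ⟪f, g⟫ = ∫ ω, f ω * g ω ∂μ := by
  simp [L2.inner_def, mul_comm]

theorem L2.nonneg_of_forall_inner_nonneg {W : Lp ℝ 2 μ}
    (h : ∀ g : Lp ℝ 2 μ, 0 ≤ g → 0 ≤ ⟪W, g⟫) : 0 ≤ W := by
  rw [← Lp.coeFn_nonneg]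
  refine (Lp.finStronglyMeasurable W two_ne_zero ENNReal.ofNat_ne_top).aefinStronglyMeasurable
    |>.ae_nonneg_of_forall_setIntegral_nonneg
    (fun s _ hμs => integrableOn_Lp_of_measure_ne_top W one_le_two hμs.ne) fun s hs hμs => ?_
  rw [← L2.inner_indicatorConstLp_one hs hμs.ne, real_inner_comm]
  refine h _ ((Lp.coeFn_nonneg _).1 ?_)
  filter_upwards [indicatorConstLp_coeFn (p := 2) (hs := hs) (hμs := hμs.ne) (c := (1 : ℝ))]
    with ω hω
  rw [hω]
  exact indicator_nonneg (fun _ _ => zero_le_one) ω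

theorem L2.exists_nonneg_separating_of_notMem_closure {B : Set (Lp ℝ 2 μ)}
    (hconv : Convex ℝ B) (h0 : 0 ∈ B) (hlower : IsLowerSet B) {z : Lp ℝ 2 μ} (hz : z ∉ closure B) :
    ∃ W : Lp ℝ 2 μ, 0 ≤ W ∧ 1 < ⟪W, z⟫ ∧ ∀ y ∈ B, ⟪W, y⟫ ≤ 1 := by
  obtain ⟨f, u, hfB, hfz⟩ := geometric_hahn_banach_closed_point hconv.closure isClosed_closure hz
  have hu : 0 < u := by simpa using hfB 0 (subset_closure h0)
  set W := u⁻¹ • (InnerProductSpace.toDual ℝ (Lp ℝ 2 μ)).symm f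
  have hW : ∀ y, ⟪W, y⟫ = u⁻¹ * f y := fun y => by
    simp [W, real_inner_smul_left, InnerProductSpace.toDual_symm_apply]
  refine ⟨W, L2.nonneg_of_forall_inner_nonneg fun g hg => ?_, ?_, fun y hy => ?_⟩
  · rw [hW]
    refine mul_nonneg (inv_nonneg.2 hu.le) (not_lt.1 fun hneg => ?_)
    -- `-s • g ∈ B` for all `s ≥ 0`, and `s = u / -f g` would give `f (-s • g) = u`
    have hray := hfB _ (subset_closure (hlower (neg_nonpos.2 (smul_nonneg
      (div_nonneg hu.le (neg_nonneg.2 hneg.le)) hg)) h0))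
    rw [map_neg, map_smul, smul_eq_mul, div_mul_eq_mul_div, div_neg, neg_neg,
      mul_div_assoc, div_self hneg.ne, mul_one] at hray
    exact lt_irrefl _ hray
  · rw [hW]
    exact (one_lt_inv_mul₀ hu).2 hfz
  · rw [hW]
    exact (inv_mul_le_one₀ hu).2 (hfB y (subset_closure hy)).le

section Exhaustion

variable {p : ℝ≥0∞} [Fact (1 ≤ p)] {S : Set (Lp ℝ p μ)}

theorem Lp.exists_mem_forall_measure_support_le [IsFiniteMeasure μ] (hclosed : IsClosed S)
    (hconv : Convex ℝ S) (h0 : 0 ∈ S) (hnorm : ∀ W ∈ S, ‖W‖ ≤ 1) (hnonneg : ∀ W ∈ S, 0 ≤ W) :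
    ∃ Z ∈ S, ∀ W ∈ S, μ (Function.support W) ≤ μ (Function.support Z) := by
  set T := (fun W : Lp ℝ p μ => μ (Function.support W)) '' S
  obtain ⟨u, -, hu, huT⟩ := exists_seq_tendsto_sSup (⟨_, mem_image_of_mem _ h0⟩ : T.Nonempty)
    (OrderTop.bddAbove T)
  choose W hWS hWu using huT
  have hsum : Summable fun n => (2⁻¹ : ℝ) ^ (n + 1) • W n := by
    refine Summable.of_norm_bounded ((summable_geometric_two).mul_left 2⁻¹) fun n => ?_
    rw [norm_smul, Real.norm_of_nonneg (by positivity), pow_succ', one_div]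
    exact mul_le_of_le_one_right (by positivity) (hnorm _ (hWS n))
  refine ⟨_, hconv.tsum_geometric_smul_mem hclosed h0 hWS hsum, fun V hV => ?_⟩
  refine (le_sSup (mem_image_of_mem _ hV)).trans (le_of_tendsto' hu fun n => ?_)
  rw [← hWu n]
  refine measure_mono_ae ?_
  have hle := (Lp.coeFn_le _ _).2 (le_hasSum hsum.hasSum n fun j _ =>
    smul_nonneg (by positivity) (hnonneg _ (hWS j)))
  filter_upwards [hle, Lp.coeFn_smul ((2⁻¹ : ℝ) ^ (n + 1)) (W n),
    (Lp.coeFn_nonneg _).2 (hnonneg _ (hWS n))] with ω h1 h2 h3 hω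
  rw [h2, Pi.smul_apply, smul_eq_mul] at h1
  exact (mul_pos (by positivity) (h3.lt_of_ne' hω)).trans_le h1 |>.ne'

theorem Lp.exists_mem_ae_pos_of_forall_setIntegral_pos [IsFiniteMeasure μ]
    (hclosed : IsClosed S) (hconv : Convex ℝ S) (h0 : 0 ∈ S) (hnorm : ∀ W ∈ S, ‖W‖ ≤ 1)
    (hnonneg : ∀ W ∈ S, 0 ≤ W)
    (hsupp : ∀ N, MeasurableSet N → μ N ≠ 0 → ∃ W ∈ S, 0 < ∫ ω in N, W ω ∂μ) :
    ∃ Z ∈ S, ∀ᵐ ω ∂μ, 0 < Z ω := by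
  obtain ⟨Z, hZS, hZmax⟩ := exists_mem_forall_measure_support_le hclosed hconv h0 hnorm hnonneg
  have hZ0 := (Lp.coeFn_nonneg _).2 (hnonneg Z hZS)
  refine ⟨Z, hZS, ?_⟩
  suffices hN : μ (Function.support Z)ᶜ = 0 by
    filter_upwards [hZ0, measure_eq_zero_iff_ae_notMem.1 hN] with ω hω hωN
    exact hω.lt_of_ne' (not_not.1 hωN)
  by_contra hN
  have hNmeas := (measurableSet_support (Lp.stronglyMeasurable Z).measurable).compl
  obtain ⟨W, hWS, hW⟩ := hsupp _ hNmeas hN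
  have hW0 := (Lp.coeFn_nonneg _).2 (hnonneg W hWS)
  have hWN := (setIntegral_pos_iff_support_of_nonneg_ae (ae_restrict_of_ae hW0)
    (integrableOn_Lp_of_measure_ne_top W Fact.out (measure_ne_top μ _))).1 hW
  -- the midpoint of `Z` and `W` is supported on a strictly larger set than `Z`
  have hsupp_mid : ∀ᵐ ω ∂μ,
      ω ∈ Function.support Z ∪ (Function.support W ∩ (Function.support Z)ᶜ) →
        ω ∈ Function.support ⇑((2⁻¹ : ℝ) • Z + (2⁻¹ : ℝ) • W) := by
    filter_upwards [hZ0, hW0, Lp.coeFn_add ((2⁻¹ : ℝ) • Z) ((2⁻¹ : ℝ) • W),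
      Lp.coeFn_smul (2⁻¹ : ℝ) Z, Lp.coeFn_smul (2⁻¹ : ℝ) W] with ω hZω hWω h1 h2 h3 hω
    simp only [Function.mem_support, h1, Pi.add_apply, h2, h3, Pi.smul_apply, smul_eq_mul]
    have hZω : 0 ≤ Z ω := hZω
    have hWω : 0 ≤ W ω := hWω
    rcases hω with hω | ⟨hω, -⟩
    · linarith [hZω.lt_of_ne' hω]
    · linarith [hWω.lt_of_ne' hω]
  have hle := (measure_mono_ae (s := _ ∪ _) hsupp_mid).trans (hZmax _ (hconv hZS hWS
    (by norm_num : (0 : ℝ) ≤ 2⁻¹) (by norm_num : (0 : ℝ) ≤ 2⁻¹) (by norm_num)))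
  rw [measure_union (disjoint_compl_right.mono_right inter_subset_right)
    ((measurableSet_support (Lp.stronglyMeasurable W).measurable).inter hNmeas)] at hle
  exact (ENNReal.lt_add_right (measure_ne_top μ _) hWN.ne').not_ge hle

end Exhaustion

theorem exists_equiv_probabilityMeasure_of_ae_pos [NeZero μ] {Z : Ω → ℝ} (hZ : Integrable Z μ)
    (hpos : ∀ᵐ ω ∂μ, 0 < Z ω) :
    ∃ Q : Measure Ω, IsProbabilityMeasure Q ∧ Q ≪ μ ∧ μ ≪ Q ∧
      ∀ g : Ω → ℝ, ∫ ω, g ω ∂Q = (∫ ω, Z ω ∂μ)⁻¹ * ∫ ω, Z ω * g ω ∂μ := by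
  set c := ∫ ω, Z ω ∂μ
  have hc : 0 < c := by
    rw [integral_pos_iff_support_of_nonneg_ae (hpos.mono fun _ h => h.le) hZ]
    refine pos_iff_ne_zero.2 fun h0 => ?_
    obtain ⟨ω, hω, hω0⟩ := (hpos.and (measure_eq_zero_iff_ae_notMem.1 h0)).exists
    exact hω0 hω.ne'
  have hdens_meas : AEMeasurable (fun ω => ENNReal.ofReal (c⁻¹ * Z ω)) μ :=
    (hZ.aemeasurable.const_mul _).ennreal_ofReal
  refine ⟨μ.withDensity fun ω => ENNReal.ofReal (c⁻¹ * Z ω), ⟨?_⟩,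
    withDensity_absolutelyContinuous _ _, withDensity_absolutelyContinuous' hdens_meas ?_,
    fun g => ?_⟩
  · rw [withDensity_apply _ MeasurableSet.univ, Measure.restrict_univ,
      ← ofReal_integral_eq_lintegral_ofReal (hZ.const_mul _)
        (hpos.mono fun _ h => by positivity), integral_const_mul, inv_mul_cancel₀ hc.ne',
      ENNReal.ofReal_one]
  · filter_upwards [hpos] with ω hω
    positivity
  · rw [integral_withDensity_eq_integral_toReal_smul₀ hdens_meas (by simp), ← integral_const_mul]
    refine integral_congr_ae ?_
    filter_upwards [hpos] with ω hω
    rw [ENNReal.toReal_ofReal (by positivity), smul_eq_mul, mul_assoc]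

end MeasureTheory

namespace KrepsYan

variable {C : Set (Lp ℝ ∞ μ)}

def dominatedL2 (C : Set (Lp ℝ ∞ μ)) : Set (Lp ℝ 2 μ) :=
  {y | ∃ x ∈ C, (∀ᵐ ω ∂μ, -1 ≤ x ω) ∧ y ≤ᵐ[μ] x}

def boundedDensities (C : Set (Lp ℝ ∞ μ)) : Set (Lp ℝ 2 μ) :=
  {W | 0 ≤ W ∧ ‖W‖ ≤ 1 ∧ ∀ y ∈ dominatedL2 C, ⟪W, y⟫ ≤ 1}

theorem zero_mem_dominatedL2 (h0 : 0 ∈ C) : (0 : Lp ℝ 2 μ) ∈ dominatedL2 C := by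
  refine ⟨0, h0, ?_, ?_⟩
  · filter_upwards [Lp.coeFn_zero ℝ ∞ μ] with ω h
    rw [h]
    norm_num
  · filter_upwards [Lp.coeFn_zero ℝ ∞ μ, Lp.coeFn_zero ℝ 2 μ] with ω h h'
    rw [h, h']

theorem isLowerSet_dominatedL2 : IsLowerSet (dominatedL2 C : Set (Lp ℝ 2 μ)) := by
  rintro y z hzy ⟨x, hxC, hx1, hyx⟩
  exact ⟨x, hxC, hx1, ((Lp.coeFn_le _ _).2 hzy).trans hyx⟩

theorem convex_dominatedL2 (hconv : Convex ℝ C) : Convex ℝ (dominatedL2 C : Set (Lp ℝ 2 μ)) := by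
  rintro y₁ ⟨x₁, hx₁C, hx₁, hy₁⟩ y₂ ⟨x₂, hx₂C, hx₂, hy₂⟩ a b ha hb hab
  refine ⟨a • x₁ + b • x₂, hconv hx₁C hx₂C ha hb hab, ?_, ?_⟩
  · filter_upwards [hx₁, hx₂, Lp.coeFn_add (a • x₁) (b • x₂), Lp.coeFn_smul a x₁,
      Lp.coeFn_smul b x₂] with ω h₁ h₂ hadd hsmul₁ hsmul₂
    simp only [hadd, Pi.add_apply, hsmul₁, hsmul₂, Pi.smul_apply, smul_eq_mul]
    nlinarith
  · filter_upwards [hy₁, hy₂, Lp.coeFn_add (a • x₁) (b • x₂), Lp.coeFn_smul a x₁,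
      Lp.coeFn_smul b x₂, Lp.coeFn_add (a • y₁) (b • y₂), Lp.coeFn_smul a y₁,
      Lp.coeFn_smul b y₂] with ω h₁ h₂ hx hx₁ hx₂ hy hy₁ hy₂
    simp only [hx, hy, Pi.add_apply, hx₁, hx₂, hy₁, hy₂, Pi.smul_apply, smul_eq_mul]
    exact add_le_add (mul_le_mul_of_nonneg_left h₁ ha) (mul_le_mul_of_nonneg_left h₂ hb)

theorem zero_mem_boundedDensities : (0 : Lp ℝ 2 μ) ∈ boundedDensities C :=
  ⟨le_rfl, by simp, fun y _ => by simp⟩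

theorem isClosed_boundedDensities : IsClosed (boundedDensities C : Set (Lp ℝ 2 μ)) := by
  simp only [boundedDensities, ofPred_and, ofPred_forall]
  exact isClosed_nonneg.inter ((isClosed_le continuous_norm continuous_const).inter
    (isClosed_iInter fun y => isClosed_iInter fun _ =>
      isClosed_le (continuous_id.inner continuous_const) continuous_const))

theorem convex_boundedDensities : Convex ℝ (boundedDensities C : Set (Lp ℝ 2 μ)) := by
  rintro W₁ ⟨hW₁, hW₁n, hW₁y⟩ W₂ ⟨hW₂, hW₂n, hW₂y⟩ a b ha hb hab
  refine ⟨add_nonneg (smul_nonneg ha hW₁) (smul_nonneg hb hW₂), ?_, fun y hy => ?_⟩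
  · exact (convex_closedBall (0 : Lp ℝ 2 μ) 1 (mem_closedBall_zero_iff.2 hW₁n)
      (mem_closedBall_zero_iff.2 hW₂n) ha hb hab |> mem_closedBall_zero_iff.1)
  · rw [inner_add_left, real_inner_smul_left, real_inner_smul_left]
    nlinarith [hW₁y y hy, hW₂y y hy]

theorem integral_mul_le_one_of_mem_boundedDensities [IsFiniteMeasure μ] {W : Lp ℝ 2 μ}
    (hW : W ∈ boundedDensities C) {x : Lp ℝ ∞ μ} (hx : x ∈ C) (hx1 : ∀ᵐ ω ∂μ, -1 ≤ x ω) :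
    ∫ ω, W ω * x ω ∂μ ≤ 1 := by
  have hx2 : MemLp x 2 μ := (Lp.memLp x).mono_exponent le_top
  calc ∫ ω, W ω * x ω ∂μ = ∫ ω, W ω * hx2.toLp x ω ∂μ :=
        integral_congr_ae (EventuallyEq.rfl.mul hx2.coeFn_toLp.symm)
    _ = ⟪W, hx2.toLp x⟫ := (L2.inner_eq_integral_mul _ _).symm
    _ ≤ 1 := hW.2.2 _ ⟨x, hx, hx1, hx2.coeFn_toLp.le⟩

theorem exists_measure_lt_of_indicatorConstLp_mem_closure {N : Set Ω} (hN : MeasurableSet N)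
    (hμN : μ N ≠ ∞) {t : ℝ}
    (h : indicatorConstLp 2 hN hμN (t + 1) ∈ closure (dominatedL2 C)) {ε : ℝ≥0∞} (hε : ε ≠ 0) :
    ∃ x ∈ C, (∀ᵐ ω ∂μ, -1 ≤ x ω) ∧ μ (N ∩ {ω | x ω < t}) < ε := by
  obtain ⟨y, ⟨x, hxC, hx1, hyx⟩, hdist⟩ :=
    EMetric.mem_closure_iff.1 h (min ε 1) (lt_min (pos_iff_ne_zero.2 hε) one_pos)
  refine ⟨x, hxC, hx1, ?_⟩
  set z := indicatorConstLp 2 hN hμN (t + 1)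
  calc μ (N ∩ {ω | x ω < t}) ≤ μ {ω | 1 ≤ ‖(⇑z - ⇑y) ω‖ₑ} := by
        refine measure_mono_ae (s := N ∩ _) ?_
        filter_upwards [indicatorConstLp_coeFn (p := 2) (hs := hN) (hμs := hμN) (c := t + 1),
          hyx] with ω hz hyx ⟨hωN, hωx⟩
        show 1 ≤ ‖(⇑z - ⇑y) ω‖ₑ
        rw [Pi.sub_apply, hz, indicator_of_mem hωN, Real.enorm_eq_ofReal_abs,
          ENNReal.one_le_ofReal]
        exact le_abs.2 (Or.inl (by linarith [show x ω < t from hωx]))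
    _ ≤ edist z y ^ 2 := by
        simpa [Lp.edist_def] using meas_ge_le_mul_pow_eLpNorm_enorm μ two_ne_zero
          ENNReal.ofNat_ne_top ((Lp.aestronglyMeasurable z).sub (Lp.aestronglyMeasurable y))
          one_ne_zero (by simp)
    _ ≤ edist z y := pow_le_of_le_one zero_le (hdist.le.trans (min_le_right _ _)) two_ne_zero
    _ < ε := hdist.trans_le (min_le_left _ _)

theorem indicatorConstLp_mem_of_forall_exists_ge [IsFiniteMeasure μ] (hclosed : IsClosed C)
    (hcone : ∀ c : ℝ, 0 ≤ c → ∀ x ∈ C, c • x ∈ C) (hlower : IsLowerSet C) {B : Set Ω}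
    (hB : MeasurableSet B)
    (h : ∀ k : ℕ, ∃ x ∈ C, (∀ᵐ ω ∂μ, -1 ≤ x ω) ∧ ∀ᵐ ω ∂μ, ω ∈ B → k + 1 ≤ x ω) :
    indicatorConstLp ∞ hB (measure_ne_top μ B) (1 : ℝ) ∈ C := by
  refine Lp.mem_of_forall_exists_ae_sub_le hclosed hlower _ fun ε hε => ?_
  obtain ⟨k, hk⟩ := exists_nat_one_div_lt hε
  obtain ⟨x, hxC, hx1, hxB⟩ := h k
  have hk0 : (0 : ℝ) < k + 1 := by positivity
  refine ⟨((k : ℝ) + 1)⁻¹ • x, hcone _ (inv_nonneg.2 hk0.le) x hxC, ?_⟩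
  filter_upwards [indicatorConstLp_coeFn (p := ∞) (hs := hB) (hμs := measure_ne_top μ B)
    (c := (1 : ℝ)), Lp.coeFn_smul ((k : ℝ) + 1)⁻¹ x, hx1, hxB] with ω hind hsmul hω1 hωB
  rw [hind, hsmul, Pi.smul_apply, smul_eq_mul]
  by_cases hω : ω ∈ B
  · rw [indicator_of_mem hω]
    linarith [(le_inv_mul_iff₀ hk0).2 ((mul_one ((k : ℝ) + 1)).trans_le (hωB hω))]
  · rw [indicator_of_notMem hω, one_div] at *
    nlinarith [mul_le_mul_of_nonneg_left hω1 (inv_nonneg.2 hk0.le)]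

theorem exists_indicatorConstLp_notMem_closure [IsFiniteMeasure μ] (hclosed : IsClosed C)
    (hcone : ∀ c : ℝ, 0 ≤ c → ∀ x ∈ C, c • x ∈ C) (hlower : IsLowerSet C)
    (hpos : ∀ x ∈ C, 0 ≤ x → x = 0) {N : Set Ω} (hN : MeasurableSet N) (hN0 : μ N ≠ 0) :
    ∃ t : ℝ, indicatorConstLp 2 hN (measure_ne_top μ N) t ∉ closure (dominatedL2 C) := by
  by_contra! h
  obtain ⟨ε, hε0, hεN⟩ := ENNReal.exists_pos_sum_of_countable hN0 ℕ
  choose x hxC hx1 hxN using fun k : ℕ =>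
    exists_measure_lt_of_indicatorConstLp_mem_closure hN _ (h ((k : ℝ) + 1 + 1))
      (ENNReal.coe_ne_zero.2 (hε0 k).ne')
  set A := ⋃ k : ℕ, N ∩ {ω | x k ω < k + 1}
  have hA : μ A < μ N := (measure_iUnion_le _).trans_lt
    ((ENNReal.tsum_le_tsum fun k => (hxN k).le).trans_lt hεN)
  have hB : MeasurableSet (N \ A) := hN.diff (MeasurableSet.iUnion fun k =>
    hN.inter (measurableSet_lt (Lp.stronglyMeasurable (x k)).measurable measurable_const))
  have hB0 : μ (N \ A) ≠ 0 := fun h0 => hA.not_ge <| by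
    simpa [h0] using tsub_le_iff_right.1 (le_measure_sdiff (μ := μ) (s₁ := N) (s₂ := A))
  have hmem := indicatorConstLp_mem_of_forall_exists_ge hclosed hcone hlower hB fun k =>
    ⟨x k, hxC k, hx1 k, Eventually.of_forall fun ω ⟨hωN, hωA⟩ =>
      not_lt.1 fun hlt => hωA (mem_iUnion.2 ⟨k, hωN, hlt⟩)⟩
  have hzero := hpos _ hmem ((Lp.coeFn_nonneg _).1 (indicatorConstLp_coeFn.mono fun ω h =>
    h ▸ indicator_nonneg (fun _ _ => zero_le_one) ω))
  have := congrArg norm hzero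
  rw [norm_indicatorConstLp_top hB0, norm_zero, norm_one] at this
  exact one_ne_zero this

theorem exists_mem_boundedDensities_setIntegral_pos [IsFiniteMeasure μ] (hclosed : IsClosed C)
    (hconv : Convex ℝ C) (hcone : ∀ c : ℝ, 0 ≤ c → ∀ x ∈ C, c • x ∈ C) (hlower : IsLowerSet C)
    (h0 : 0 ∈ C) (hpos : ∀ x ∈ C, 0 ≤ x → x = 0) {N : Set Ω} (hN : MeasurableSet N)
    (hN0 : μ N ≠ 0) : ∃ W ∈ boundedDensities C, 0 < ∫ ω in N, W ω ∂μ := by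
  obtain ⟨t, ht⟩ := exists_indicatorConstLp_notMem_closure hclosed hcone hlower hpos hN hN0
  obtain ⟨W, hW0, hWt, hWy⟩ := L2.exists_nonneg_separating_of_notMem_closure
    (convex_dominatedL2 hconv) (zero_mem_dominatedL2 h0) isLowerSet_dominatedL2 ht
  have hWN : 0 < ∫ ω in N, W ω ∂μ := by
    rw [real_inner_comm, L2.inner_indicatorConstLp_eq_inner_setIntegral] at hWt
    refine (setIntegral_nonneg_ae hN ((Lp.coeFn_nonneg W).2 hW0 |>.mono fun ω h _ => h)).lt_of_ne
      fun h => ?_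
    rw [← h, inner_zero_right] at hWt
    exact one_pos.not_gt hWt
  set c := (max 1 ‖W‖)⁻¹
  have hc : 0 < c := inv_pos.2 (lt_max_of_lt_left one_pos)
  have hc1 : c ≤ 1 := inv_le_one_of_one_le₀ (le_max_left _ _)
  refine ⟨c • W, ⟨smul_nonneg hc.le hW0, ?_, fun y hy => ?_⟩, ?_⟩
  · rw [norm_smul, Real.norm_of_nonneg hc.le]
    exact inv_mul_le_one_of_le₀ (le_max_right _ _) (zero_le_one.trans (le_max_left _ _))
  · rw [real_inner_smul_left]
    nlinarith [hWy y hy, hc1]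
  · rw [← L2.inner_indicatorConstLp_one hN (measure_ne_top μ N), inner_smul_right,
      L2.inner_indicatorConstLp_one]
    exact mul_pos hc hWN

end KrepsYan

end Lp

/-- For a norm-closed convex cone `C ⊆ L^∞` with `C ∩ L^∞_+ = {0}` and
`-L^∞_+ ⊆ C`, there is a probability measure `Q` equivalent to `P` such that
`sup_{x ∈ C₁} ∫ x dQ < ∞`, where `C₁ = {x ∈ C : ess inf x ≥ -1}`. -/
theorem stmt1 {Ω : Type*} [MeasurableSpace Ω] (P : Measure Ω) [IsProbabilityMeasure P]
    (C : Set (Lp ℝ ⊤ P))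
    (hclosed : IsClosed C) (hconv : Convex ℝ C)
    (hcone : ∀ (c : ℝ), 0 ≤ c → ∀ x ∈ C, c • x ∈ C)
    (hC_pos : C ∩ {x : Lp ℝ ⊤ P | 0 ≤ᵐ[P] ⇑x} = {0})
    (hneg : ∀ x : Lp ℝ ⊤ P, 0 ≤ᵐ[P] ⇑x → -x ∈ C) :
    ∃ Q : Measure Ω, IsProbabilityMeasure Q ∧ Q ≪ P ∧ P ≪ Q ∧
      ∃ M : ℝ, ∀ x ∈ C, (-1 : ℝ) ≤ essInf (⇑x) P → ∫ ω, x ω ∂Q ≤ M := by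
  have h0 : (0 : Lp ℝ ⊤ P) ∈ C := (hC_pos.ge rfl).1
  have hpos : ∀ x ∈ C, 0 ≤ x → x = 0 := fun x hx hx0 =>
    hC_pos.le ⟨hx, (Lp.coeFn_nonneg x).2 hx0⟩
  have hlower : IsLowerSet C := isLowerSet_of_convex_of_smul_mem hconv hcone fun x hx =>
    hneg x ((Lp.coeFn_nonneg x).2 hx)
  obtain ⟨Z, hZS, hZpos⟩ := Lp.exists_mem_ae_pos_of_forall_setIntegral_pos
    KrepsYan.isClosed_boundedDensities KrepsYan.convex_boundedDensities
    KrepsYan.zero_mem_boundedDensities (fun W hW => hW.2.1) (fun W hW => hW.1) fun N hN hN0 =>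
      KrepsYan.exists_mem_boundedDensities_setIntegral_pos hclosed hconv hcone hlower h0 hpos hN hN0
  obtain ⟨Q, hQ, hQP, hPQ, hQint⟩ := exists_equiv_probabilityMeasure_of_ae_pos
    (Lp.memLp Z |>.integrable one_le_two) hZpos
  refine ⟨Q, hQ, hQP, hPQ, (∫ ω, Z ω ∂P)⁻¹, fun x hx hx1 => ?_⟩
  rw [hQint]
  exact mul_le_of_le_one_right (inv_nonneg.2 (integral_nonneg_of_ae (hZpos.mono fun _ h => h.le)))
    (KrepsYan.integral_mul_le_one_of_mem_boundedDensities hZS hx (Lp.ae_le_of_le_essInf x hx1))
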